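/- arXiv:1810.10692 — 5 statements merged into one kernel-verified Lean document; each statement's English description precedes it below -/
import Mathlib

section
/- Let a, b, r be positive real numbers and let s be a real number with s > r. Then the integral \(\int_0^{\infty} t^{s-1} \frac{e^{-bt}}{(1+e^{-at})^{r}}\,dt\) is finite and equals \(a^{-s}\,\Gamma(s)\,\sum_{k=0}^{\infty} \frac{\Gamma(r+k)}{\Gamma(r)\,k!}\,\frac{(-1)^{k}}{(k+b/a)^{s}}\), where the series converges absolutely. -/
/-!
Expanding `(1 + e^{-at})^{-r}` by the binomial series writes the integrand as the generalized
Dirichlet series `t^{s-1} ∑ₖ (r)ₖ/k! (-1)ᵏ e^{-(b+ak)t}`, and termwise integration gives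
`Γ(s) ∑ₖ (r)ₖ/k! (-1)ᵏ (b+ak)^{-s}`. Termwise integration is legitimate because, by Euler's
limit formula for `Γ`, `(r)ₖ/k! = O(k^{r-1})`, so the series of absolute values converges when
`s > r`.
-/

open Real MeasureTheory Set Filter Asymptotics

theorem ascPochhammer_eval_eq_prod_range {R : Type*} [CommSemiring R] (n : ℕ) (x : R) :
    (ascPochhammer R n).eval x = ∏ j ∈ Finset.range n, (x + j) := by
  induction n with
  | zero => simp
  | succ n ih => simp [ascPochhammer_succ_right, ih, Finset.prod_range_succ]

theorem Real.Gamma_add_nat_div_Gamma_eq {x : ℝ} (hx : ∀ k : ℕ, x ≠ -k) (n : ℕ) :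
    Gamma (x + n) / Gamma x = (ascPochhammer ℝ n).eval x := by
  have h := Complex.Gamma_add_nat_div_Gamma_eq (n := n) x (by exact_mod_cast hx)
  rw [← Complex.ofReal_inj]
  push_cast [← Complex.Gamma_ofReal]
  rw [h, ascPochhammer_eval_eq_prod_range, ascPochhammer_eval_eq_prod_range]
  push_cast
  rfl

theorem Ring.choose_add_nat_sub_one_eq {K : Type*} [Field K] [CharZero K] (x : K) (n : ℕ) :
    Ring.choose (x + n - 1) n = (ascPochhammer K n).eval x / n.factorial := by
  rw [← Ring.multichoose_eq, ← Polynomial.ascPochhammer_smeval_eq_eval,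
    ← Ring.factorial_nsmul_multichoose_eq_ascPochhammer, nsmul_eq_mul, mul_comm,
    mul_div_cancel_right₀ _ (Nat.cast_ne_zero.mpr n.factorial_ne_zero)]

theorem Real.Gamma_add_nat_div_mul_factorial_eq_choose {x : ℝ} (hx : ∀ k : ℕ, x ≠ -k)
    (n : ℕ) :
    Gamma (x + n) / (Gamma x * n.factorial) = Ring.choose (x + n - 1) n := by
  rw [← div_div, Gamma_add_nat_div_Gamma_eq hx, Ring.choose_add_nat_sub_one_eq]

theorem Real.GammaSeq_eq_div_choose (x : ℝ) (n : ℕ) :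
    GammaSeq x n = n ^ x / ((x + n) * Ring.choose (x + n - 1) n) := by
  rw [GammaSeq, Ring.choose_add_nat_sub_one_eq, ← ascPochhammer_eval_eq_prod_range,
    ascPochhammer_succ_eval]
  field_simp

theorem Real.hasSum_choose_mul_pow (a : ℝ) {x : ℝ} (hx : |x| < 1) :
    HasSum (fun n : ℕ ↦ Ring.choose (a + n - 1) n * x ^ n) ((1 - x) ^ (-a)) := by
  have h := (one_div_one_sub_rpow_hasFPowerSeriesOnBall_zero a).hasSum (y := x)
    (by simpa [enorm_eq_nnnorm, ← NNReal.coe_lt_one] using hx)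
  simp only [FormalMultilinearSeries.ofScalars_apply_eq, smul_eq_mul, zero_add] at h
  rwa [rpow_neg (by linarith [(abs_lt.mp hx).2]), inv_eq_one_div]

theorem Real.choose_add_nat_sub_one_pos {x : ℝ} (hx : 0 < x) (n : ℕ) :
    0 < Ring.choose (x + n - 1) n := by
  rw [← Gamma_add_nat_div_mul_factorial_eq_choose
    fun k ↦ ((neg_nonpos.mpr k.cast_nonneg).trans_lt hx).ne']
  positivity

theorem Real.isBigO_choose_add_nat_sub_one {x : ℝ} (hx : 0 < x) :
    (fun n : ℕ ↦ Ring.choose (x + n - 1) n) =O[atTop] fun n ↦ (n : ℝ) ^ (x - 1) := by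
  refine IsBigO.of_bound (2 / Gamma x) ?_
  filter_upwards [(GammaSeq_tendsto_Gamma x).eventually_const_le
    (half_lt_self (Gamma_pos_of_pos hx)), eventually_gt_atTop 0] with n hseq hn
  have hn' : (0 : ℝ) < n := Nat.cast_pos.mpr hn
  have hchoose := choose_add_nat_sub_one_pos hx n
  rw [GammaSeq_eq_div_choose, le_div_iff₀ (by positivity)] at hseq
  rw [norm_of_nonneg hchoose.le, norm_of_nonneg (by positivity), rpow_sub_one hn'.ne']
  calc Ring.choose (x + n - 1) n ≤ n ^ x / (Gamma x / 2 * (x + n)) := by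
        rw [le_div_iff₀ (by positivity)]
        linarith
    _ ≤ n ^ x / (Gamma x / 2 * n) := by gcongr; linarith
    _ = 2 / Gamma x * (n ^ x / n) := by field_simp

theorem Real.summable_choose_add_nat_sub_one_div_rpow {x s c : ℝ} (hx : 0 < x) (hs : x < s)
    (hc : 0 ≤ c) : Summable fun n : ℕ ↦ Ring.choose (x + n - 1) n / (n + c) ^ s := by
  have hdecay : (fun n : ℕ ↦ ((n : ℝ) + c) ^ s)⁻¹ =O[atTop] fun n ↦ (n : ℝ) ^ (-s) := by
    refine IsBigO.of_bound 1 ?_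
    filter_upwards [eventually_gt_atTop 0] with n hn
    have hn' : (0 : ℝ) < n := Nat.cast_pos.mpr hn
    rw [Pi.inv_apply, norm_inv, norm_of_nonneg (by positivity), norm_of_nonneg (by positivity),
      one_mul, rpow_neg hn'.le]
    gcongr <;> linarith
  refine summable_of_isBigO_nat' (Real.summable_nat_rpow.mpr (by linarith : x - 1 + -s < -1)) ?_
  refine ((isBigO_choose_add_nat_sub_one hx).mul hdecay).congr' (by simp [div_eq_mul_inv]) ?_
  filter_upwards [eventually_gt_atTop 0] with n hn
  rw [← rpow_add (Nat.cast_pos.mpr hn)]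

theorem hasSum_integral_rpow_mul_of_hasSum_exp {ι : Type*} [Countable ι] {a p : ι → ℝ}
    {F : ℝ → ℝ} {s : ℝ} (hp : ∀ i, 0 < p i) (hs : 0 < s)
    (hF : ∀ t ∈ Ioi 0, HasSum (fun i ↦ a i * rexp (-p i * t)) (F t))
    (h_sum : Summable fun i ↦ |a i| / p i ^ s) :
    HasSum (fun i ↦ Gamma s * a i / p i ^ s) (∫ t in Ioi 0, t ^ (s - 1) * F t) := by
  have h := hasSum_mellin (a := fun i ↦ (a i : ℂ)) (F := fun t ↦ (F t : ℂ)) (s := s)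
    (fun i ↦ Or.inr (hp i)) (by simpa using hs)
    (fun t ht ↦ by exact_mod_cast Complex.hasSum_ofReal.mpr (hF t ht)) (by simpa using h_sum)
  rw [← Complex.hasSum_ofReal]
  convert h using 1
  · ext i
    push_cast [← Complex.Gamma_ofReal, Complex.ofReal_cpow (hp i).le]
    rfl
  · rw [mellin, ← integral_complex_ofReal]
    refine setIntegral_congr_fun measurableSet_Ioi fun t ht ↦ ?_
    push_cast [Complex.ofReal_cpow (le_of_lt ht)]
    rfl

noncomputable def logisticGenerator (a b r t : ℝ) : ℝ :=
  rexp (-(b * t)) / (1 + rexp (-(a * t))) ^ r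

theorem hasSum_logisticGenerator {a t : ℝ} (ha : 0 < a) (ht : 0 < t) (b r : ℝ) :
    HasSum (fun k : ℕ ↦ Ring.choose (r + k - 1) k * (-1) ^ k * rexp (-(b + a * k) * t))
      (logisticGenerator a b r t) := by
  have hx : |-rexp (-(a * t))| < 1 := by
    rw [abs_neg, abs_of_pos (exp_pos _), exp_lt_one_iff]
    nlinarith
  have hterm (k : ℕ) : Ring.choose (r + k - 1) k * (-1) ^ k * rexp (-(b + a * k) * t) =
      rexp (-(b * t)) * (Ring.choose (r + k - 1) k * (-rexp (-(a * t))) ^ k) := by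
    rw [neg_pow (rexp _), ← exp_nat_mul, show -(b + a * k) * t = -(b * t) + k * -(a * t) by ring,
      exp_add]
    ring
  rw [funext hterm, logisticGenerator, div_eq_mul_inv, ← rpow_neg (by positivity),
    ← sub_neg_eq_add]
  exact (Real.hasSum_choose_mul_pow r hx).mul_left _

theorem logisticGenerator_le_exp (a : ℝ) {r : ℝ} (hr : 0 ≤ r) (b t : ℝ) :
    logisticGenerator a b r t ≤ rexp (-(b * t)) :=
  div_le_self (exp_pos _).le (one_le_rpow (by linarith [exp_pos (-(a * t))]) hr)

theorem integrableOn_rpow_mul_logisticGenerator {s b r : ℝ} (hs : 0 < s) (hb : 0 < b)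
    (hr : 0 ≤ r) (a : ℝ) :
    IntegrableOn (fun t ↦ t ^ (s - 1) * logisticGenerator a b r t) (Ioi 0) := by
  have hgamma : IntegrableOn (fun t ↦ t ^ (s - 1) * rexp (-(b * t))) (Ioi 0) := by
    simpa using integrableOn_rpow_mul_exp_neg_mul_rpow (p := 1) (by linarith) one_pos hb
  refine hgamma.mono' (by unfold logisticGenerator; fun_prop) ?_
  filter_upwards [ae_restrict_mem measurableSet_Ioi] with t (ht : 0 < t)
  have hpos : 0 ≤ logisticGenerator a b r t := by unfold logisticGenerator; positivity
  rw [norm_of_nonneg (by positivity)]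
  exact mul_le_mul_of_nonneg_left (logisticGenerator_le_exp a hr b t) (by positivity)

/-- For `a, b, r > 0` and `s > r`, the integral
`∫_0^∞ t^(s-1) e^(-bt)/(1+e^(-at))^r dt` is finite and equals
`a^(-s) Γ(s) ∑_{k≥0} (Γ(r+k)/(Γ(r) k!)) (-1)^k / (k + b/a)^s`,
the series converging absolutely. -/
theorem normalizing_integral_eq_hurwitz_lerch
    (a b r s : ℝ) (ha : 0 < a) (hb : 0 < b) (hr : 0 < r) (hs : r < s) :
    IntegrableOn
      (fun t : ℝ => t ^ (s - 1) * (Real.exp (-(b * t)) / (1 + Real.exp (-(a * t))) ^ r))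
      (Ioi 0) volume ∧
    Summable (fun k : ℕ =>
      |Real.Gamma (r + (k : ℝ)) / (Real.Gamma r * (k.factorial : ℝ)) *
        ((-1 : ℝ) ^ k / ((k : ℝ) + b / a) ^ s)|) ∧
    ∫ t in Ioi (0 : ℝ),
        t ^ (s - 1) * (Real.exp (-(b * t)) / (1 + Real.exp (-(a * t))) ^ r) =
      a ^ (-s) * Real.Gamma s *
        ∑' k : ℕ, Real.Gamma (r + (k : ℝ)) / (Real.Gamma r * (k.factorial : ℝ)) *
          ((-1 : ℝ) ^ k / ((k : ℝ) + b / a) ^ s) := by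
  have hs0 : 0 < s := hr.trans hs
  simp only [Gamma_add_nat_div_mul_factorial_eq_choose
    fun k ↦ ((neg_nonpos.mpr k.cast_nonneg).trans_lt hr).ne']
  have hchoose := choose_add_nat_sub_one_pos hr
  have hscale (k : ℕ) : (b + a * k) ^ s = a ^ s * (k + b / a) ^ s := by
    rw [← mul_rpow ha.le (by positivity), mul_add, mul_div_cancel₀ _ ha.ne', add_comm]
  have hsum := summable_choose_add_nat_sub_one_div_rpow hr hs (div_pos hb ha).le
  have hmellin := hasSum_integral_rpow_mul_of_hasSum_exp (p := fun k : ℕ ↦ b + a * k)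
    (fun k ↦ by positivity) hs0 (fun t ht ↦ hasSum_logisticGenerator ha ht b r)
    (by
      refine (hsum.mul_left (a ^ (-s))).congr fun k ↦ ?_
      rw [abs_mul, abs_pow, abs_neg, abs_one, one_pow, mul_one, abs_of_pos (hchoose k), hscale,
        rpow_neg ha.le]
      field_simp)
  refine ⟨integrableOn_rpow_mul_logisticGenerator hs0 hb hr.le a, hsum.congr fun k ↦ ?_,
    hmellin.tsum_eq.symm.trans ?_⟩
  · rw [abs_mul, abs_div, abs_pow, abs_neg, abs_one, one_pow, abs_of_pos (hchoose k),
      abs_of_pos (by positivity), mul_one_div]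
  · rw [← tsum_mul_left]
    congr 1 with k
    rw [hscale, rpow_neg ha.le]
    field_simp
end

section
/- Let a, b, r, s be positive real numbers and let t > 0. Then \(\int_0^{\infty} y^{s-1}\,\frac{e^{-b(t+y)}}{(1+e^{-a(t+y)})^{r}}\,dy = e^{-bt}\,a^{-s}\,\Gamma(s)\,\sum_{k=0}^{\infty} \frac{\Gamma(r+k)}{\Gamma(r)\,k!}\,\frac{(-e^{-at})^{k}}{(k+b/a)^{s}}\), where the series converges absolutely (since \(e^{-at}<1\)). -/
/-!
Expanding `(1 + e^{-a(t+y)})^{-r}` by the binomial series (valid since `e^{-a(t+y)} < 1`) writes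
the integrand as `y^{s-1} ∑ₖ cₖ e^{-(b+ak)y}`. Each term integrates to `Γ(s) cₖ (b+ak)^{-s}`, and
the sum may be integrated termwise because `∑ₖ |cₖ| (b+ak)^{-s}` is dominated by the absolutely
convergent binomial series at `-e^{-at}`.
-/

open Real MeasureTheory Set

namespace Real

theorem Gamma_add_nat_eq_ascPochhammer_mul {r : ℝ} (hr : 0 < r) (n : ℕ) :
    Gamma (r + n) = (ascPochhammer ℝ n).eval r * Gamma r := by
  induction n with
  | zero => simp
  | succ n ih =>
    rw [Nat.cast_succ, ← add_assoc, Gamma_add_one (by positivity), ih,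
      ascPochhammer_succ_eval]
    ring

theorem Gamma_add_nat_div_mul_factorial_eq_choose_s1 {r : ℝ} (hr : 0 < r) (n : ℕ) :
    Gamma (r + n) / (Gamma r * n.factorial) = Ring.choose (r + n - 1) n := by
  rw [Ring.choose_eq_smul, Polynomial.descPochhammer_smeval_eq_ascPochhammer,
    Polynomial.ascPochhammer_smeval_eq_eval, Gamma_add_nat_eq_ascPochhammer_mul hr,
    smul_eq_mul, show r + n - 1 - n + 1 = r by ring]
  field_simp [(Gamma_pos_of_pos hr).ne']

theorem hasSum_choose_mul_pow_s1 (r : ℝ) {u : ℝ} (hu : |u| < 1) :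
    HasSum (fun n : ℕ => Ring.choose (r + n - 1) n * u ^ n) (1 / (1 - u) ^ r) := by
  have hf := one_div_one_sub_rpow_hasFPowerSeriesOnBall_zero r
  have := hf.hasSum (y := u) (by simpa [Metric.mem_eball, edist_dist] using hu)
  simpa [FormalMultilinearSeries.ofScalars_apply_eq, mul_comm] using this

theorem summable_abs_choose_mul_pow (r : ℝ) {u : ℝ} (hu : |u| < 1) :
    Summable (fun n : ℕ => |Ring.choose (r + n - 1) n * u ^ n|) := by
  have hf := one_div_one_sub_rpow_hasFPowerSeriesOnBall_zero r
  have := FormalMultilinearSeries.summable_norm_apply _ (x := u)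
    (Metric.eball_subset_eball hf.r_le (by simpa [Metric.mem_eball, edist_dist] using hu))
  simpa [FormalMultilinearSeries.ofScalars_apply_eq, mul_comm] using this

theorem hasSum_Gamma_add_nat_div_mul_pow {r u : ℝ} (hr : 0 < r) (hu : |u| < 1) :
    HasSum (fun n : ℕ => Gamma (r + n) / (Gamma r * n.factorial) * u ^ n) (1 / (1 - u) ^ r) := by
  simpa only [Gamma_add_nat_div_mul_factorial_eq_choose_s1 hr] using hasSum_choose_mul_pow_s1 r hu

theorem summable_abs_Gamma_add_nat_div_mul_pow {r u : ℝ} (hr : 0 < r) (hu : |u| < 1) :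
    Summable (fun n : ℕ => |Gamma (r + n) / (Gamma r * n.factorial) * u ^ n|) := by
  simpa only [Gamma_add_nat_div_mul_factorial_eq_choose_s1 hr] using summable_abs_choose_mul_pow r hu

theorem integrableOn_rpow_mul_exp_neg_mul_Ioi {s p : ℝ} (hs : 0 < s) (hp : 0 < p) :
    IntegrableOn (fun y : ℝ => y ^ (s - 1) * exp (-(p * y))) (Ioi 0) := by
  simpa [rpow_one] using
    integrableOn_rpow_mul_exp_neg_mul_rpow (s := s - 1) (by linarith) one_pos hp

theorem hasSum_integral_rpow_mul_of_hasSum_exp {ι : Type*} [Countable ι] {c p : ι → ℝ}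
    {F : ℝ → ℝ} {s : ℝ} (hs : 0 < s) (hp : ∀ i, 0 < p i)
    (hF : ∀ y ∈ Ioi 0, HasSum (fun i => c i * exp (-(p i * y))) (F y))
    (hc : Summable fun i => |c i| / p i ^ s) :
    HasSum (fun i => Gamma s * c i / p i ^ s) (∫ y in Ioi 0, y ^ (s - 1) * F y) := by
  have hterm (i : ι) (c' : ℝ) :
      ∫ y in Ioi 0, c' * (y ^ (s - 1) * exp (-(p i * y))) = Gamma s * c' / p i ^ s := by
    rw [integral_const_mul, integral_rpow_mul_exp_neg_mul_Ioi hs (hp i),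
      div_rpow zero_le_one (hp i).le, one_rpow]
    ring
  have hnorm (i : ι) (y : ℝ) (hy : 0 < y) :
      ‖c i * (y ^ (s - 1) * exp (-(p i * y)))‖ = |c i| * (y ^ (s - 1) * exp (-(p i * y))) := by
    rw [norm_mul, norm_eq_abs, norm_of_nonneg (by positivity)]
  have hsum := hasSum_integral_of_summable_integral_norm
    (F := fun i y => c i * (y ^ (s - 1) * exp (-(p i * y)))) (μ := volume.restrict (Ioi 0))
    (fun i => (integrableOn_rpow_mul_exp_neg_mul_Ioi hs (hp i)).const_mul (c i)) ?_
  · have hF' : ∫ y in Ioi 0, y ^ (s - 1) * F y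
        = ∫ y in Ioi 0, ∑' i, c i * (y ^ (s - 1) * exp (-(p i * y))) :=
      setIntegral_congr_fun measurableSet_Ioi fun y hy => by
        simp_rw [mul_left_comm (c _), tsum_mul_left, (hF y hy).tsum_eq]
    simpa only [hF', hterm] using hsum
  · simp_rw [setIntegral_congr_fun measurableSet_Ioi (hnorm _), hterm]
    simpa [mul_div_assoc] using hc.mul_left (Gamma s)

theorem abs_neg_exp_neg_lt_one {z : ℝ} (hz : 0 < z) : |-exp (-z)| < 1 := by
  rwa [abs_neg, abs_of_pos (exp_pos _), exp_lt_one_iff, neg_lt_zero]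

theorem hasSum_exp_div_one_add_exp_rpow {a b r u : ℝ} (hr : 0 < r) (hau : 0 < a * u) :
    HasSum (fun k : ℕ => Gamma (r + k) / (Gamma r * k.factorial) * (-1) ^ k *
      exp (-((b + a * k) * u))) (exp (-(b * u)) / (1 + exp (-(a * u))) ^ r) := by
  have hterm (k : ℕ) : exp (-(b * u)) * (Gamma (r + k) / (Gamma r * k.factorial) *
      (-exp (-(a * u))) ^ k) = Gamma (r + k) / (Gamma r * k.factorial) * (-1) ^ k *
      exp (-((b + a * k) * u)) := by
    rw [neg_pow, ← exp_nat_mul, show -((b + a * k) * u) = -(b * u) + k * -(a * u) by ring, exp_add]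
    ring
  have hsum :=
    (hasSum_Gamma_add_nat_div_mul_pow hr (abs_neg_exp_neg_lt_one hau)).mul_left (exp (-(b * u)))
  rwa [sub_neg_eq_add, mul_one_div, funext hterm] at hsum

theorem summable_abs_div_rpow_add {f : ℕ → ℝ} (hf : Summable fun k => |f k|) {m s : ℝ}
    (hm : 0 < m) (hs : 0 ≤ s) : Summable fun k : ℕ => |f k / (k + m) ^ s| := by
  refine (hf.div_const (m ^ s)).of_nonneg_of_le (fun k => abs_nonneg _) fun k => ?_
  rw [abs_div, abs_of_pos (rpow_pos_of_pos (by positivity) s)]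
  gcongr
  simp

end Real

/-- For `a, b, r, s > 0` and `t > 0`,
`∫_0^∞ y^(s-1) e^(-b(t+y))/(1+e^(-a(t+y)))^r dy
  = e^(-bt) a^(-s) Γ(s) ∑_{k≥0} (Γ(r+k)/(Γ(r) k!)) (-e^(-at))^k / (k + b/a)^s`,
the series converging absolutely. -/
theorem marginal_generator_eq_hurwitz_lerch
    (a b r s t : ℝ) (ha : 0 < a) (hb : 0 < b) (hr : 0 < r) (hs : 0 < s) (ht : 0 < t) :
    Summable (fun k : ℕ =>
      |Real.Gamma (r + (k : ℝ)) / (Real.Gamma r * (k.factorial : ℝ)) *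
        ((-Real.exp (-(a * t))) ^ k / ((k : ℝ) + b / a) ^ s)|) ∧
    ∫ y in Ioi (0 : ℝ),
        y ^ (s - 1) * (Real.exp (-(b * (t + y))) / (1 + Real.exp (-(a * (t + y)))) ^ r) =
      Real.exp (-(b * t)) * a ^ (-s) * Real.Gamma s *
        ∑' k : ℕ, Real.Gamma (r + (k : ℝ)) / (Real.Gamma r * (k.factorial : ℝ)) *
          ((-Real.exp (-(a * t))) ^ k / ((k : ℝ) + b / a) ^ s) := by
  have hsum := summable_abs_div_rpow_add
    (summable_abs_Gamma_add_nat_div_mul_pow hr (abs_neg_exp_neg_lt_one (mul_pos ha ht)))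
    (div_pos hb ha) hs.le
  simp only [mul_div_assoc] at hsum
  refine ⟨hsum, ?_⟩
  set c : ℕ → ℝ := fun k => Gamma (r + k) / (Gamma r * k.factorial) * (-1) ^ k *
    exp (-((b + a * k) * t))
  set p : ℕ → ℝ := fun k => b + a * k
  have hp (k : ℕ) : 0 < p k := by positivity
  have hF : ∀ y ∈ Ioi (0 : ℝ), HasSum (fun k => c k * exp (-(p k * y)))
      (exp (-(b * (t + y))) / (1 + exp (-(a * (t + y)))) ^ r) := fun y hy => by
    convert hasSum_exp_div_one_add_exp_rpow (b := b) hr (mul_pos ha (add_pos ht hy))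
      using 2 with k
    rw [mul_add, neg_add, exp_add, ← mul_assoc]
  have hcoef (k : ℕ) : c k / p k ^ s = exp (-(b * t)) * a ^ (-s) *
      (Gamma (r + k) / (Gamma r * k.factorial) * ((-exp (-(a * t))) ^ k / (k + b / a) ^ s)) := by
    have hpk : b + a * k = a * (k + b / a) := by field_simp; ring
    simp only [c, p]
    rw [show -((b + a * k) * t) = -(b * t) + k * -(a * t) by ring, exp_add, hpk,
      mul_rpow ha.le (by positivity), rpow_neg ha.le, neg_pow (exp _), ← exp_nat_mul]
    ring
  have hc : Summable fun k => |c k| / p k ^ s := by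
    refine (hsum.mul_left (exp (-(b * t)) * a ^ (-s))).congr fun k => ?_
    rw [← abs_of_pos (rpow_pos_of_pos (hp k) s), ← abs_div, hcoef,
      abs_mul (exp (-(b * t)) * a ^ (-s)),
      abs_of_pos (by positivity : 0 < exp (-(b * t)) * a ^ (-s))]
  rw [← (hasSum_integral_rpow_mul_of_hasSum_exp hs hp hF hc).tsum_eq, ← tsum_mul_left]
  exact tsum_congr fun k => by rw [mul_div_assoc, hcoef]; ring
end

section
/- Let n ≥ 3 be an integer with n ≠ 4. Then \(\int_0^{\infty} x^{n/2-1}\,\frac{e^{-x}}{(1+e^{-x})^{2}}\,dx = \Gamma(n/2)\,(1-2^{2-n/2})\,\zeta(n/2-1)\), where ζ is the analytically continued Riemann zeta function; consequently the normalizing constant \(c_n=\frac{\Gamma(n/2)}{(2\pi)^{n/2}}\left[\int_0^{\infty}x^{n/2-1}\frac{e^{-x}}{(1+e^{-x})^2}dx\right]^{-1}\) equals \(\pi^{-n/2}\left[(2^{n/2}-4)\,\zeta(n/2-1)\right]^{-1}\). -/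
/-!
Integrating by parts against `-(eˣ + 1)⁻¹`, an antiderivative of the logistic density, turns
`∫₀^∞ x^(s-1) e⁻ˣ/(1 + e⁻ˣ)² dx` into `(s - 1) ∫₀^∞ x^(s-2) (eˣ + 1)⁻¹ dx`, i.e. `(s - 1)` times the
Mellin transform of the Fermi–Dirac function `(eᵗ + 1)⁻¹` at `s - 1`. Expanding
`(eᵗ + 1)⁻¹ = ∑ₖ (-1)ᵏ e^(-(k+1)t)` and integrating termwise gives `Γ(w) η(w)` for `Re w > 1`, where
`η(w) = ∑ₖ (-1)ᵏ (k+1)^(-w) = (1 - 2^(1-w)) ζ(w)`. Both sides are holomorphic on the connected set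
`{Re w > 0} \ {1}`, so the identity theorem extends the formula there, and `(s - 1) Γ(s - 1) = Γ(s)`.
-/

open Real MeasureTheory Set

lemma continuous_inv_exp_add_one : Continuous fun t : ℝ ↦ (rexp t + 1)⁻¹ :=
  (continuous_exp.add continuous_const).inv₀ fun t ↦ (by positivity : 0 < rexp t + 1).ne'

lemma inv_exp_add_one_le_exp_neg (t : ℝ) : (rexp t + 1)⁻¹ ≤ rexp (-t) := by
  rw [exp_neg]
  exact inv_anti₀ (exp_pos t) (by linarith)

lemma inv_exp_add_one_le_one (t : ℝ) : (rexp t + 1)⁻¹ ≤ 1 :=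
  inv_le_one_of_one_le₀ (by linarith [exp_pos t])

lemma hasSum_inv_exp_add_one {t : ℝ} (ht : 0 < t) :
    HasSum (fun k : ℕ ↦ (-1 : ℂ) ^ k * (rexp (-((k : ℝ) + 1) * t) : ℂ))
      ((rexp t + 1)⁻¹ : ℝ) := by
  have hq : |-rexp (-t)| < 1 := by
    rw [abs_neg, abs_of_pos (exp_pos _)]
    exact exp_lt_one_iff.mpr (neg_lt_zero.mpr ht)
  have hgeom := (hasSum_geometric_of_abs_lt_one hq).mul_left (rexp (-t))
  have hterm (k : ℕ) :
      rexp (-t) * (-rexp (-t)) ^ k = (-1) ^ k * rexp (-((k : ℝ) + 1) * t) := by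
    rw [neg_pow, ← exp_nat_mul, mul_left_comm, ← exp_add]
    ring_nf
  have hsum : rexp (-t) * (1 - -rexp (-t))⁻¹ = (rexp t + 1)⁻¹ := by
    rw [sub_neg_eq_add, exp_neg]
    field_simp
  simp_rw [hterm, hsum] at hgeom
  exact_mod_cast Complex.hasSum_ofReal.mpr hgeom

lemma hasSum_one_div_nat_add_one_cpow {s : ℂ} (hs : 1 < s.re) :
    HasSum (fun k : ℕ ↦ 1 / ((k : ℂ) + 1) ^ s) (riemannZeta s) := by
  rw [zeta_eq_tsum_one_div_nat_add_one_cpow hs]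
  refine Summable.hasSum ?_
  simpa using (summable_nat_add_iff 1).mpr (Complex.summable_one_div_nat_cpow.mpr hs)

lemma hasSum_neg_one_pow_div_nat_add_one_cpow {s : ℂ} (hs : 1 < s.re) :
    HasSum (fun k : ℕ ↦ (-1) ^ k / ((k : ℂ) + 1) ^ s) ((1 - 2 ^ (1 - s)) * riemannZeta s) := by
  have hζ := hasSum_one_div_nat_add_one_cpow hs
  have hodd : HasSum (fun m : ℕ ↦ 1 / (((2 * m + 1 : ℕ) : ℂ) + 1) ^ s)
      (2 ^ (-s) * riemannZeta s) := by
    refine (hζ.mul_left _).congr_fun fun m ↦ ?_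
    have h2 : ((2 * m + 1 : ℕ) : ℂ) + 1 = ((2 : ℝ) : ℂ) * ((m + 1 : ℝ) : ℂ) := by
      push_cast
      ring
    rw [h2, Complex.mul_cpow_ofReal_nonneg zero_le_two (by positivity), Complex.cpow_neg]
    push_cast
    ring
  have heven : HasSum (fun m : ℕ ↦ 1 / (((2 * m : ℕ) : ℂ) + 1) ^ s)
      (riemannZeta s - 2 ^ (-s) * riemannZeta s) := by
    have h : HasSum (fun m : ℕ ↦ 1 / (((2 * m : ℕ) : ℂ) + 1) ^ s) _ :=
      (hζ.summable.comp_injective (mul_right_injective₀ two_ne_zero)).hasSum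
    have hsplit := (h.even_add_odd (f := fun k : ℕ ↦ 1 / ((k : ℂ) + 1) ^ s) hodd).unique hζ
    rwa [eq_sub_of_add_eq hsplit] at h
  have h := HasSum.even_add_odd (f := fun k : ℕ ↦ (-1 : ℂ) ^ k / ((k : ℂ) + 1) ^ s)
    (heven.congr_fun fun m ↦ by simp [pow_mul])
    (hodd.neg.congr_fun fun m ↦ by simp [pow_succ, pow_mul]; ring)
  convert h using 1
  rw [sub_eq_add_neg (1 : ℂ) s, Complex.cpow_add _ _ two_ne_zero, Complex.cpow_one]
  ring

lemma mellin_inv_exp_add_one_of_one_lt_re {s : ℂ} (hs : 1 < s.re) :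
    mellin (fun t : ℝ ↦ (((rexp t + 1)⁻¹ : ℝ) : ℂ)) s =
      Complex.Gamma s * (1 - 2 ^ (1 - s)) * riemannZeta s := by
  have hnorm : Summable fun k : ℕ ↦ ‖(-1 : ℂ) ^ k‖ / ((k : ℝ) + 1) ^ s.re := by
    simpa using (summable_nat_add_iff 1).mpr (Real.summable_one_div_nat_rpow.mpr hs)
  have h := hasSum_mellin (fun k ↦ Or.inr (by positivity)) (one_pos.trans hs)
    (fun t ht ↦ hasSum_inv_exp_add_one ht) hnorm
  refine h.unique ?_
  rw [mul_assoc]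
  refine ((hasSum_neg_one_pow_div_nat_add_one_cpow hs).mul_left _).congr_fun fun k ↦ ?_
  push_cast
  ring

lemma differentiableAt_mellin_inv_exp_add_one {s : ℂ} (hs : 0 < s.re) :
    DifferentiableAt ℂ (mellin fun t : ℝ ↦ (((rexp t + 1)⁻¹ : ℝ) : ℂ)) s := by
  have hnorm (t : ℝ) : ‖(((rexp t + 1)⁻¹ : ℝ) : ℂ)‖ = (rexp t + 1)⁻¹ := by
    rw [Complex.norm_real, norm_of_nonneg (by positivity)]
  refine mellin_differentiableAt_of_isBigO_rpow_exp (b := 0) one_pos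
    ((Complex.continuous_ofReal.comp continuous_inv_exp_add_one).continuousOn.locallyIntegrableOn
      measurableSet_Ioi)
    (.of_bound 1 (.of_forall fun t ↦ ?_)) (.of_bound 1 (.of_forall fun t ↦ ?_)) hs
  · rw [hnorm, one_mul, neg_one_mul, norm_of_nonneg (exp_pos _).le]
    exact inv_exp_add_one_le_exp_neg t
  · rw [hnorm, one_mul, neg_zero, rpow_zero, norm_one]
    exact inv_exp_add_one_le_one t

lemma differentiableAt_gamma_mul_one_sub_two_cpow_mul_riemannZeta {s : ℂ} (hs : 0 < s.re)
    (hs1 : s ≠ 1) :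
    DifferentiableAt ℂ (fun s ↦ Complex.Gamma s * (1 - 2 ^ (1 - s)) * riemannZeta s) s := by
  have hΓ : DifferentiableAt ℂ Complex.Gamma s := by
    refine Complex.differentiableAt_Gamma s fun m hm ↦ ?_
    have : s.re = -m := by simp [hm]
    linarith [(Nat.cast_nonneg m : (0 : ℝ) ≤ m)]
  have h2 : DifferentiableAt ℂ (fun s : ℂ ↦ (2 : ℂ) ^ (1 - s)) s :=
    ((differentiableAt_const 1).sub differentiableAt_id).const_cpow (Or.inl two_ne_zero)
  exact (hΓ.mul ((differentiableAt_const 1).sub h2)).mul (differentiableAt_riemannZeta hs1)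

lemma isPreconnected_setOf_lt_re_diff_singleton {a : ℝ} {c : ℂ} (hc : a < c.re) :
    IsPreconnected ({z : ℂ | a < z.re} \ {c}) := by
  let A := {z : ℂ | a < z.re} ∩ {z | c.im < z.im}
  let B := {z : ℂ | a < z.re} ∩ {z | z.im < c.im}
  let C := {z : ℂ | a < z.re} ∩ {z | z.re < c.re}
  let D := {z : ℂ | c.re < z.re}
  have hAD : IsPreconnected (A ∪ D) :=
    ((convex_halfSpace_re_gt a).inter (convex_halfSpace_im_gt c.im)).isPreconnected.union'
      ⟨⟨c.re + 1, c.im + 1⟩, by simp [A, D]; linarith⟩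
      (convex_halfSpace_re_gt c.re).isPreconnected
  have hCB : IsPreconnected (C ∪ B) :=
    ((convex_halfSpace_re_gt a).inter (convex_halfSpace_re_lt c.re)).isPreconnected.union'
      ⟨⟨(a + c.re) / 2, c.im - 1⟩, by simp [B, C]; refine ⟨⟨?_, ?_⟩, ?_⟩ <;> linarith⟩
      ((convex_halfSpace_re_gt a).inter (convex_halfSpace_im_lt c.im)).isPreconnected
  have hmid : ((A ∪ D) ∩ (C ∪ B)).Nonempty := ⟨⟨(a + c.re) / 2, c.im + 1⟩, by
    simp [A, C, D]
    exact ⟨Or.inl (by linarith), Or.inl ⟨by linarith, by linarith⟩⟩⟩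
  convert hAD.union' hmid hCB using 1
  ext z
  simp only [A, B, C, D, mem_sdiff, mem_ofPred_eq, mem_singleton_iff, mem_union, mem_inter_iff,
    Complex.ext_iff]
  constructor
  · rintro ⟨ha, hne⟩
    rcases lt_trichotomy z.re c.re with h | h | h <;>
      rcases lt_trichotomy z.im c.im with h' | h' | h' <;> tauto
  · rintro ((⟨ha, h⟩ | h) | ⟨ha, h⟩ | ⟨ha, h⟩) <;>
      refine ⟨by linarith, fun ⟨h1, h2⟩ ↦ ?_⟩ <;> linarith

lemma mellin_inv_exp_add_one {s : ℂ} (hs : 0 < s.re) (hs1 : s ≠ 1) :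
    mellin (fun t : ℝ ↦ (((rexp t + 1)⁻¹ : ℝ) : ℂ)) s =
      Complex.Gamma s * (1 - 2 ^ (1 - s)) * riemannZeta s := by
  let U : Set ℂ := {z | 0 < z.re} \ {1}
  have hU : IsOpen U :=
    (isOpen_lt continuous_const Complex.continuous_re).sdiff isClosed_singleton
  have hmellin : AnalyticOnNhd ℂ (mellin fun t : ℝ ↦ (((rexp t + 1)⁻¹ : ℝ) : ℂ)) U :=
    DifferentiableOn.analyticOnNhd (fun z hz ↦
      (differentiableAt_mellin_inv_exp_add_one hz.1).differentiableWithinAt) hU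
  have hzeta : AnalyticOnNhd ℂ
      (fun s ↦ Complex.Gamma s * (1 - 2 ^ (1 - s)) * riemannZeta s) U :=
    DifferentiableOn.analyticOnNhd (fun z hz ↦
      (differentiableAt_gamma_mul_one_sub_two_cpow_mul_riemannZeta hz.1 hz.2).differentiableWithinAt)
      hU
  have heq : mellin (fun t : ℝ ↦ (((rexp t + 1)⁻¹ : ℝ) : ℂ)) =ᶠ[nhds 2]
      fun s ↦ Complex.Gamma s * (1 - 2 ^ (1 - s)) * riemannZeta s := by
    filter_upwards [(isOpen_lt continuous_const Complex.continuous_re).mem_nhds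
      (by norm_num : (1 : ℝ) < (2 : ℂ).re)] with z hz
    exact mellin_inv_exp_add_one_of_one_lt_re hz
  exact hmellin.eqOn_of_preconnected_of_eventuallyEq hzeta
    (isPreconnected_setOf_lt_re_diff_singleton (by norm_num)) (by norm_num [U]) heq ⟨hs, hs1⟩

lemma integral_rpow_mul_inv_exp_add_one {s : ℝ} (hs : 0 < s) (hs1 : s ≠ 1) :
    ((∫ x in Ioi 0, x ^ (s - 1) * (rexp x + 1)⁻¹ : ℝ) : ℂ) =
      Real.Gamma s * (1 - ((2 : ℝ) ^ (1 - s) : ℝ)) * riemannZeta s := by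
  rw [← Complex.Gamma_ofReal, Complex.ofReal_cpow zero_le_two, Complex.ofReal_ofNat,
    Complex.ofReal_sub, Complex.ofReal_one, ← mellin_inv_exp_add_one (by simpa using hs)
    (by exact_mod_cast hs1), mellin, ← integral_complex_ofReal]
  refine setIntegral_congr_fun measurableSet_Ioi fun x hx ↦ ?_
  rw [smul_eq_mul, Complex.ofReal_mul, Complex.ofReal_cpow (le_of_lt hx)]
  push_cast
  rfl

lemma hasDerivAt_neg_inv_exp_add_one (x : ℝ) :
    HasDerivAt (fun x ↦ -(rexp x + 1)⁻¹) (rexp (-x) / (1 + rexp (-x)) ^ 2) x := by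
  refine (((hasDerivAt_exp x).add_const 1).inv (by positivity)).neg.congr_deriv ?_
  rw [exp_neg]
  field_simp

lemma integrableOn_rpow_mul_of_abs_le_exp_neg {g : ℝ → ℝ} {s : ℝ} (hs : -1 < s)
    (hg : ContinuousOn g (Ioi 0)) (hle : ∀ x > 0, |g x| ≤ rexp (-x)) :
    IntegrableOn (fun x ↦ x ^ s * g x) (Ioi 0) := by
  have hΓ := GammaIntegral_convergent (s := s + 1) (by linarith)
  rw [add_sub_cancel_right] at hΓ
  refine hΓ.mono' (((continuousOn_id.rpow_const fun x hx ↦ Or.inl (ne_of_gt hx)).mul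
    hg).aestronglyMeasurable measurableSet_Ioi) ?_
  filter_upwards [ae_restrict_mem measurableSet_Ioi] with x hx
  rw [norm_mul, norm_of_nonneg (rpow_nonneg (le_of_lt hx) _), mul_comm (rexp (-x))]
  exact mul_le_mul_of_nonneg_left (hle x hx) (rpow_nonneg (le_of_lt hx) _)

lemma integral_rpow_mul_logistic_eq_sub_one_mul {s : ℝ} (hs : 1 < s) :
    ∫ x in Ioi 0, x ^ (s - 1) * (rexp (-x) / (1 + rexp (-x)) ^ 2) =
      (s - 1) * ∫ x in Ioi 0, x ^ (s - 2) * (rexp x + 1)⁻¹ := by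
  have hu (x : ℝ) (hx : x ∈ Ioi 0) :
      HasDerivAt (fun x ↦ x ^ (s - 1)) ((s - 1) * x ^ (s - 2)) x := by
    convert hasDerivAt_rpow_const (p := s - 1) (Or.inl (ne_of_gt hx)) using 3
    ring
  have huv' : IntegrableOn (fun x ↦ x ^ (s - 1) * (rexp (-x) / (1 + rexp (-x)) ^ 2)) (Ioi 0) := by
    refine integrableOn_rpow_mul_of_abs_le_exp_neg (by linarith)
      (by fun_prop (disch := intro x _; positivity)) fun x _ ↦ ?_
    rw [abs_of_nonneg (by positivity)]
    exact div_le_self (exp_pos _).le (one_le_pow₀ (by linarith [exp_pos (-x)]))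
  have hu'v : IntegrableOn (fun x ↦ (s - 1) * x ^ (s - 2) * -(rexp x + 1)⁻¹) (Ioi 0) := by
    have h := integrableOn_rpow_mul_of_abs_le_exp_neg (g := fun x ↦ -(rexp x + 1)⁻¹)
      (s := s - 2) (by linarith) continuous_inv_exp_add_one.neg.continuousOn fun x _ ↦ by
        rw [abs_neg, abs_of_pos (by positivity)]
        exact inv_exp_add_one_le_exp_neg x
    exact IntegrableOn.congr_fun (h.const_mul (s - 1)) (fun x _ ↦ (mul_assoc _ _ _).symm)
      measurableSet_Ioi
  have h_zero : Filter.Tendsto (fun x ↦ x ^ (s - 1) * -(rexp x + 1)⁻¹) (nhdsWithin 0 (Ioi 0))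
      (nhds 0) := by
    have hc : ContinuousAt (fun x ↦ x ^ (s - 1) * -(rexp x + 1)⁻¹) 0 :=
      (continuousAt_rpow_const 0 (s - 1) (Or.inr (by linarith))).mul
        continuous_inv_exp_add_one.neg.continuousAt
    simpa [zero_rpow (by linarith : s - 1 ≠ 0)] using hc.tendsto.mono_left nhdsWithin_le_nhds
  have h_infty : Filter.Tendsto (fun x ↦ x ^ (s - 1) * -(rexp x + 1)⁻¹) Filter.atTop (nhds 0) := by
    refine squeeze_zero_norm' ?_ (tendsto_rpow_mul_exp_neg_mul_atTop_nhds_zero (s - 1) 1 one_pos)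
    filter_upwards [Filter.eventually_gt_atTop 0] with x hx
    rw [norm_mul, norm_neg, norm_of_nonneg (rpow_nonneg hx.le _), norm_of_nonneg (by positivity),
      neg_one_mul]
    exact mul_le_mul_of_nonneg_left (inv_exp_add_one_le_exp_neg x) (rpow_nonneg hx.le _)
  rw [integral_Ioi_mul_deriv_eq_deriv_mul hu (fun x _ ↦ hasDerivAt_neg_inv_exp_add_one x) huv'
    hu'v h_zero h_infty, sub_zero, zero_sub, ← integral_neg, ← integral_const_mul]
  refine setIntegral_congr_fun measurableSet_Ioi fun x _ ↦ ?_
  ring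

lemma integral_rpow_mul_logistic {s : ℝ} (hs : 1 < s) (hs2 : s ≠ 2) :
    ((∫ x in Ioi 0, x ^ (s - 1) * (rexp (-x) / (1 + rexp (-x)) ^ 2) : ℝ) : ℂ) =
      Real.Gamma s * (1 - ((2 : ℝ) ^ (2 - s) : ℝ)) * riemannZeta (s - 1) := by
  have hFD := integral_rpow_mul_inv_exp_add_one (s := s - 1) (by linarith)
    (fun h ↦ hs2 (by linarith))
  rw [show s - 1 - 1 = s - 2 by ring, show (1 : ℝ) - (s - 1) = 2 - s by ring] at hFD
  rw [integral_rpow_mul_logistic_eq_sub_one_mul hs, Complex.ofReal_mul, hFD,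
    ← sub_add_cancel s 1, Real.Gamma_add_one (by linarith), sub_add_cancel]
  push_cast
  ring

lemma gamma_div_two_pi_rpow_mul_inv {s : ℝ} (hs : 0 < s) (Z : ℂ) :
    ((Real.Gamma s / (2 * π) ^ s : ℝ) : ℂ) *
        ((Real.Gamma s : ℂ) * (1 - ((2 : ℝ) ^ (2 - s) : ℝ)) * Z)⁻¹ =
      ((π ^ (-s) : ℝ) : ℂ) * ((((2 : ℝ) ^ s - 4 : ℝ) : ℂ) * Z)⁻¹ := by
  have h4 : (2 : ℝ) ^ s - 4 = 2 ^ s * (1 - 2 ^ (2 - s)) := by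
    rw [mul_sub, mul_one, ← rpow_add two_pos, add_sub_cancel]
    norm_num
  have hΓ : (Real.Gamma s : ℂ) ≠ 0 := by exact_mod_cast (Gamma_pos_of_pos hs).ne'
  have h2 : (((2 : ℝ) ^ s : ℝ) : ℂ) ≠ 0 := by exact_mod_cast (rpow_pos_of_pos two_pos s).ne'
  have hπ : ((π ^ s : ℝ) : ℂ) ≠ 0 := by exact_mod_cast (rpow_pos_of_pos pi_pos s).ne'
  rw [h4, mul_rpow zero_le_two pi_pos.le, rpow_neg pi_pos.le]
  push_cast
  simp only [mul_inv, div_eq_mul_inv]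
  field_simp

/-- For an integer `n ≥ 3`, `n ≠ 4`,
`∫_0^∞ x^(n/2-1) e^(-x)/(1+e^(-x))^2 dx = Γ(n/2) (1 - 2^(2-n/2)) ζ(n/2-1)`, where `ζ` is the
analytically continued Riemann zeta function; consequently
`c_n = Γ(n/2)/(2π)^(n/2) (∫ ...)⁻¹` equals `π^(-n/2) ((2^(n/2)-4) ζ(n/2-1))⁻¹`. -/
theorem normalizing_constant_general_dim (n : ℕ) (hn : 3 ≤ n) (hn4 : n ≠ 4) :
    ((∫ x in Ioi (0 : ℝ),
        x ^ ((n : ℝ) / 2 - 1) * (Real.exp (-x) / (1 + Real.exp (-x)) ^ 2) : ℝ) : ℂ) =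
      (Real.Gamma ((n : ℝ) / 2) : ℂ) * (1 - ((2 : ℝ) ^ (2 - (n : ℝ) / 2) : ℝ)) *
        riemannZeta ((n : ℂ) / 2 - 1) ∧
    ((Real.Gamma ((n : ℝ) / 2) / (2 * π) ^ ((n : ℝ) / 2) : ℝ) : ℂ) *
        (((∫ x in Ioi (0 : ℝ),
            x ^ ((n : ℝ) / 2 - 1) * (Real.exp (-x) / (1 + Real.exp (-x)) ^ 2) : ℝ) : ℂ))⁻¹ =
      ((π ^ (-((n : ℝ) / 2)) : ℝ) : ℂ) *
        ((((2 : ℝ) ^ ((n : ℝ) / 2) - 4 : ℝ) : ℂ) * riemannZeta ((n : ℂ) / 2 - 1))⁻¹ := by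
  have hs : 1 < (n : ℝ) / 2 := by
    have : (3 : ℝ) ≤ n := by exact_mod_cast hn
    linarith
  have hs2 : (n : ℝ) / 2 ≠ 2 := fun h ↦ hn4 (by exact_mod_cast (by linarith : (n : ℝ) = 4))
  have hI := integral_rpow_mul_logistic hs hs2
  rw [show (((n : ℝ) / 2 : ℝ) : ℂ) = (n : ℂ) / 2 by push_cast; ring] at hI
  exact ⟨hI, hI ▸ gamma_div_two_pi_rpow_mul_inv (by linarith) _⟩
end

section
/- For every integer m ≥ 1, \(\zeta(2m+1) = (-1)^{m+1}\,\frac{(2\pi)^{2m+1}}{2\,(2m+1)!}\,\int_0^{1} B_{2m+1}(u)\,\cot(\pi u)\,du\), where \(B_{2m+1}(u)\) is the (2m+1)-th Bernoulli polynomial and ζ is the Riemann zeta function. -/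
open Real MeasureTheory intervalIntegral

open scoped Nat Interval

/-!
Mathlib's Fourier expansion of the odd Bernoulli polynomials on `[0, 1]` reads
`B_{2k+1}(x) = (-1)^(k+1) 2 (2k+1)! / (2π)^(2k+1) * ∑ sin(2πnx) / n^(2k+1)`.
Multiply it by `cot(πx)` and integrate term by term. The Dirichlet-kernel type identity
`sin(2nθ) cot θ = ∑_{k<n} (cos 2kθ + cos 2(k+1)θ)` shows both that
`|sin(2nθ) cot θ| ≤ 2n`, which dominates the series by `2 ∑ 1/n^(2k)`, and that
`∫₀¹ sin(2πnx) cot(πx) dx = 1` for `n ≥ 1`, so the integrated series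
is exactly `∑ 1/n^(2k+1) = ζ(2k+1)`.
-/

theorem Real.sin_two_nat_mul_mul_cot_eq_sum {θ : ℝ} (hθ : sin θ ≠ 0) (n : ℕ) :
    sin (2 * n * θ) * cot θ =
      ∑ k ∈ Finset.range n, (cos (2 * k * θ) + cos (2 * (k + 1) * θ)) := by
  induction n with
  | zero => simp
  | succ n ih =>
    have step : sin (2 * (n + 1) * θ) * cos θ =
        sin (2 * n * θ) * cos θ + (cos (2 * n * θ) + cos (2 * (n + 1) * θ)) * sin θ := by
      rw [show 2 * (n + 1) * θ = 2 * n * θ + 2 * θ by ring, sin_add, cos_add, sin_two_mul,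
        cos_two_mul]
      linear_combination (2 * sin (2 * n * θ) * cos θ) * sin_sq_add_cos_sq θ
    rw [Finset.sum_range_succ, ← ih, cot_eq_cos_div_sin]
    push_cast
    field_simp
    linear_combination step

theorem Real.abs_sin_two_nat_mul_mul_cot_le (n : ℕ) (θ : ℝ) :
    |sin (2 * n * θ) * cot θ| ≤ 2 * n := by
  rcases eq_or_ne (sin θ) 0 with hθ | hθ
  · simp [cot_eq_cos_div_sin, hθ]
  rw [sin_two_nat_mul_mul_cot_eq_sum hθ]
  calc _ ≤ ∑ k ∈ Finset.range n, (2 : ℝ) := by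
        refine (Finset.abs_sum_le_sum_abs _ _).trans
          (Finset.sum_le_sum fun k _ => (abs_add_le _ _).trans ?_)
        linarith [abs_cos_le_one (2 * k * θ), abs_cos_le_one (2 * (k + 1) * θ)]
    _ = 2 * n := by simp [mul_comm]

@[fun_prop]
theorem Real.measurable_cot : Measurable cot := by
  simp only [funext cot_eq_cos_div_sin]
  fun_prop

theorem integral_cos_two_pi_nat_mul (k : ℕ) :
    ∫ u in (0 : ℝ)..1, cos (2 * π * k * u) = if k = 0 then 1 else 0 := by
  split_ifs with hk
  · simp [hk]
  have hc : 2 * π * k ≠ 0 := by positivity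
  have hsin : sin (2 * π * k) = 0 := by
    rw [show 2 * π * k = (2 * k : ℕ) * π by push_cast; ring]
    exact sin_nat_mul_pi _
  rw [integral_comp_mul_left (fun x => cos x) hc, integral_cos]
  simp [hsin]

theorem integral_sin_two_pi_nat_mul_mul_cot {n : ℕ} (hn : n ≠ 0) :
    ∫ u in (0 : ℝ)..1, sin (2 * π * n * u) * cot (π * u) = 1 := by
  have hae : ∀ᵐ u, u ∈ Ι (0 : ℝ) 1 → sin (2 * π * n * u) * cot (π * u) =
      ∑ k ∈ Finset.range n, (cos (2 * π * k * u) + cos (2 * π * (k + 1 : ℕ) * u)) := by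
    -- the identity fails at `u = 1`, where `cot π = cos π / 0 = 0`
    filter_upwards [Measure.ae_ne volume 1] with u hu1 hu
    rw [Set.uIoc_of_le zero_le_one] at hu
    have hsin : sin (π * u) ≠ 0 :=
      (sin_pos_of_pos_of_lt_pi (by nlinarith [pi_pos, hu.1])
        (by nlinarith [pi_pos, lt_of_le_of_ne hu.2 hu1])).ne'
    rw [show 2 * π * n * u = 2 * n * (π * u) by ring, sin_two_nat_mul_mul_cot_eq_sum hsin]
    refine Finset.sum_congr rfl fun k _ => ?_
    push_cast
    ring_nf
  have hcos (c : ℝ) : IntervalIntegrable (fun u => cos (c * u)) volume 0 1 :=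
    (by fun_prop : Continuous fun u : ℝ => cos (c * u)).intervalIntegrable 0 1
  have hterm (k : ℕ) :
      ∫ u in (0 : ℝ)..1, (cos (2 * π * k * u) + cos (2 * π * (k + 1 : ℕ) * u)) =
        if k = 0 then 1 else 0 := by
    rw [integral_add (hcos _) (hcos _), integral_cos_two_pi_nat_mul, integral_cos_two_pi_nat_mul]
    simp
  rw [integral_congr_ae hae, integral_finsetSum fun k _ => (hcos _).add (hcos _),
    Finset.sum_congr rfl fun k _ => hterm k]
  simp [Nat.pos_of_ne_zero hn]

theorem integral_one_div_nat_pow_mul_sin_mul_cot {p : ℕ} (hp : p ≠ 0) (n : ℕ) :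
    ∫ u in (0 : ℝ)..1, 1 / (n : ℝ) ^ p * (sin (2 * π * n * u) * cot (π * u)) =
      1 / (n : ℝ) ^ p := by
  rw [intervalIntegral.integral_const_mul]
  rcases eq_or_ne n 0 with rfl | hn
  · simp [hp]
  · rw [integral_sin_two_pi_nat_mul_mul_cot hn, mul_one]

theorem hasSum_one_div_nat_pow_integral_bernoulli_mul_cot {k : ℕ} (hk : k ≠ 0) :
    HasSum (fun n : ℕ => 1 / (n : ℝ) ^ (2 * k + 1))
      ((-1 : ℝ) ^ (k + 1) * (2 * π) ^ (2 * k + 1) / 2 / (2 * k + 1)! *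
        ∫ u in (0 : ℝ)..1,
          Polynomial.aeval u (Polynomial.bernoulli (2 * k + 1)) * cot (π * u)) := by
  have h := hasSum_integral_of_dominated_convergence (μ := volume) (a := 0) (b := 1)
    (F := fun (n : ℕ) u => 1 / (n : ℝ) ^ (2 * k + 1) * (sin (2 * π * n * u) * cot (π * u)))
    (f := fun u => (-1 : ℝ) ^ (k + 1) * (2 * π) ^ (2 * k + 1) / 2 / (2 * k + 1)! *
      (Polynomial.aeval u (Polynomial.bernoulli (2 * k + 1)) * cot (π * u)))
    (fun n _ => 2 * (1 / (n : ℝ) ^ (2 * k)))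
    (fun n => (by fun_prop : Measurable _).aestronglyMeasurable)
    (fun n => ae_of_all _ fun u _ => ?_)
    (ae_of_all _ fun u _ => ?_)
    intervalIntegrable_const
    (ae_of_all _ fun u hu => ?_)
  · rwa [funext (integral_one_div_nat_pow_mul_sin_mul_cot (2 * k).succ_ne_zero),
      intervalIntegral.integral_const_mul] at h
  · rcases eq_or_ne n 0 with rfl | hn
    · simp [hk]
    have hsc := abs_sin_two_nat_mul_mul_cot_le n (π * u)
    rw [show 2 * n * (π * u) = 2 * π * n * u by ring] at hsc
    rw [norm_mul, Real.norm_eq_abs, Real.norm_eq_abs, abs_of_nonneg (by positivity)]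
    calc _ ≤ 1 / (n : ℝ) ^ (2 * k + 1) * (2 * n) := by gcongr
      _ = 2 * (1 / (n : ℝ) ^ (2 * k)) := by field_simp; ring
  · exact (Real.summable_one_div_nat_pow.mpr (by omega)).mul_left 2
  · rw [Set.uIoc_of_le zero_le_one] at hu
    simpa [mul_assoc] using
      (hasSum_one_div_nat_pow_mul_sin hk (Set.Ioc_subset_Icc_self hu)).mul_right (cot (π * u))

/-- For every integer `m ≥ 1`,
`ζ(2m+1) = (-1)^(m+1) (2π)^(2m+1)/(2 (2m+1)!) ∫_0^1 B_{2m+1}(u) cot(π u) du`,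
where `B_{2m+1}` is the `(2m+1)`-th Bernoulli polynomial (generating function
`t e^{tx}/(e^t - 1)`, Mathlib's `Polynomial.bernoulli`) and `ζ` is the Riemann zeta
function. -/
theorem zeta_odd_integral_representation (m : ℕ) (hm : 1 ≤ m) :
    riemannZeta ((2 * m + 1 : ℕ) : ℂ) =
      (((-1 : ℝ) ^ (m + 1) * (2 * π) ^ (2 * m + 1) / (2 * ((2 * m + 1).factorial : ℝ)) *
        ∫ u in (0 : ℝ)..1,
          (Polynomial.aeval u (Polynomial.bernoulli (2 * m + 1)) : ℝ) *
            Real.cot (π * u) : ℝ) : ℂ) := by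
  have h := Complex.hasSum_ofReal.mpr
    (hasSum_one_div_nat_pow_integral_bernoulli_mul_cot (k := m) (by omega))
  rw [zeta_nat_eq_tsum_of_gt_one (by omega), ← div_div, ← h.tsum_eq]
  push_cast
  rfl
end

section
/- For every real t > 0, \(\int_0^{\infty} w^{-1/2}\,\left(\sum_{k=1}^{\infty}(-1)^{k-1}\,k^{3/2}\,e^{-k(t+w)}\right) dw = \sqrt{\pi}\,\frac{e^{-t}}{(1+e^{-t})^{2}}\), where the series \(\sum_{k\ge 1}(-1)^{k-1}k^{3/2}e^{-ks}\) converges for every s > 0. -/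
open Real MeasureTheory Set

/-!
Integrate the series term by term. Since `∫₀^∞ w^(a-1) e^(-cw) dw = Γ(a) c^(-a)`, the `k`-th term
contributes `Γ(1/2) (-1)^(k-1) k^(3/2) k^(-1/2) e^(-kt) = √π (-1)^(k-1) k x^k` with `x = e^(-t)`, and
`∑ (-1)^(k-1) k x^k = x/(1+x)²`. The interchange is justified because the integrals of the absolute
values, `√π k e^(-kt)`, are summable.
-/

lemma integrableOn_rpow_sub_one_mul_exp_neg_mul {a c : ℝ} (ha : 0 < a) (hc : 0 < c) :
    IntegrableOn (fun w : ℝ => w ^ (a - 1) * exp (-(c * w))) (Ioi 0) := by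
  simpa [neg_mul] using
    integrableOn_rpow_mul_exp_neg_mul_rpow (p := 1) (by linarith : -1 < a - 1) one_pos hc

lemma summable_succ_rpow_mul_exp_neg_succ_mul (p : ℝ) {s : ℝ} (hs : 0 < s) :
    Summable fun j : ℕ => ((j : ℝ) + 1) ^ p * exp (-(((j : ℝ) + 1) * s)) := by
  have hpow : Summable fun j : ℕ => ((j : ℝ) + 1) ^ ⌈p⌉₊ * exp (-(((j : ℝ) + 1) * s)) :=
    ((summable_nat_add_iff 1).2 (summable_pow_mul_exp_neg_nat_mul ⌈p⌉₊ hs)).congr fun j => by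
      push_cast
      ring_nf
  refine hpow.of_nonneg_of_le (fun j => by positivity) fun j => ?_
  rw [← rpow_natCast]
  gcongr
  · linarith [(j.cast_nonneg : (0 : ℝ) ≤ j)]
  · exact Nat.le_ceil p

lemma summable_neg_one_pow_mul_succ_rpow_mul_exp_neg_succ_mul (p : ℝ) {s : ℝ} (hs : 0 < s) :
    Summable fun j : ℕ => (-1) ^ j * ((j : ℝ) + 1) ^ p * exp (-(((j : ℝ) + 1) * s)) :=
  (summable_succ_rpow_mul_exp_neg_succ_mul p hs).of_norm_bounded fun j => by
    simp [abs_of_nonneg (rpow_nonneg (Nat.cast_add_one_pos j).le p)]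

lemma integral_rpow_sub_one_mul_tsum_exp_neg_mul {a : ℝ} (ha : 0 < a) {b c : ℕ → ℝ}
    (hc : ∀ j, 0 < c j) (hb : Summable fun j => |b j| * c j ^ (-a)) :
    ∫ w in Ioi 0, w ^ (a - 1) * ∑' j, b j * exp (-(c j * w)) =
      Gamma a * ∑' j, b j * c j ^ (-a) := by
  have hint : ∀ j, ∫ w in Ioi 0, w ^ (a - 1) * exp (-(c j * w)) = Gamma a * c j ^ (-a) := by
    intro j
    rw [integral_rpow_mul_exp_neg_mul_Ioi ha (hc j), one_div, inv_rpow (hc j).le,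
      ← rpow_neg (hc j).le, mul_comm]
  have hnorm : ∀ j w, w ∈ Ioi (0 : ℝ) →
      ‖b j * (w ^ (a - 1) * exp (-(c j * w)))‖ = |b j| * (w ^ (a - 1) * exp (-(c j * w))) := by
    intro j w hw
    rw [norm_mul, Real.norm_eq_abs, Real.norm_of_nonneg (by have := hw.out.le; positivity)]
  calc ∫ w in Ioi 0, w ^ (a - 1) * ∑' j, b j * exp (-(c j * w))
      = ∫ w in Ioi 0, ∑' j, b j * (w ^ (a - 1) * exp (-(c j * w))) := by
        congr 1 with w
        rw [← tsum_mul_left]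
        exact tsum_congr fun j => by ring
    _ = ∑' j, ∫ w in Ioi 0, b j * (w ^ (a - 1) * exp (-(c j * w))) := by
        refine (integral_tsum_of_summable_integral_norm
          (fun j => (integrableOn_rpow_sub_one_mul_exp_neg_mul ha (hc j)).const_mul (b j))
          ?_).symm
        refine (hb.mul_left (Gamma a)).congr fun j => ?_
        rw [setIntegral_congr_fun measurableSet_Ioi (hnorm j), integral_const_mul, hint]
        ring
    _ = Gamma a * ∑' j, b j * c j ^ (-a) := by
        rw [← tsum_mul_left]
        refine tsum_congr fun j => ?_
        rw [integral_const_mul, hint]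
        ring

lemma rpow_three_halves_mul_rpow_neg_one_half {x : ℝ} (hx : 0 < x) :
    x ^ ((3 : ℝ) / 2) * x ^ (-(1 / 2 : ℝ)) = x := by
  rw [← rpow_add hx]
  norm_num

lemma hasSum_neg_one_pow_mul_succ_mul_pow_succ {x : ℝ} (hx : |x| < 1) :
    HasSum (fun j : ℕ => (-1) ^ j * ((j : ℝ) + 1) * x ^ (j + 1)) (x / (1 + x) ^ 2) := by
  have h := hasSum_coe_mul_geometric_of_norm_lt_one (r := -x) (by simpa using hx)
  rw [← hasSum_nat_add_iff' 1, Finset.sum_range_one] at h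
  have hval : x / (1 + x) ^ 2 = -(-x / (1 - -x) ^ 2 - (0 : ℕ) * (-x) ^ 0) := by
    simp only [CharP.cast_eq_zero, zero_mul, sub_zero, sub_neg_eq_add]
    ring
  rw [hval]
  refine h.neg.congr_fun fun j => ?_
  push_cast
  rw [neg_pow x, pow_succ (-1 : ℝ)]
  ring

/-- For every real `t > 0`,
`∫_0^∞ w^(-1/2) (∑_{k≥1} (-1)^(k-1) k^(3/2) e^(-k(t+w))) dw = √π e^(-t)/(1+e^(-t))²`,
where the series `∑_{k≥1} (-1)^(k-1) k^(3/2) e^(-ks)` converges for every `s > 0`.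
(The `k`-th term is written with `k = j + 1`, `j : ℕ`, so `(-1)^(k-1) = (-1)^j`.) -/
theorem two_dim_generator_with_logistic_marginals (t : ℝ) (ht : 0 < t) :
    (∀ s : ℝ, 0 < s → Summable (fun j : ℕ =>
      (-1 : ℝ) ^ j * ((j : ℝ) + 1) ^ ((3 : ℝ) / 2) * Real.exp (-(((j : ℝ) + 1) * s)))) ∧
    ∫ w in Ioi (0 : ℝ),
        w ^ (-(1 / 2 : ℝ)) *
          ∑' j : ℕ, (-1 : ℝ) ^ j * ((j : ℝ) + 1) ^ ((3 : ℝ) / 2) *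
            Real.exp (-(((j : ℝ) + 1) * (t + w))) =
      Real.sqrt π * (Real.exp (-t) / (1 + Real.exp (-t)) ^ 2) := by
  refine ⟨fun s hs => summable_neg_one_pow_mul_succ_rpow_mul_exp_neg_succ_mul _ hs, ?_⟩
  set b : ℕ → ℝ := fun j => (-1) ^ j * ((j : ℝ) + 1) ^ ((3 : ℝ) / 2) * exp (-(((j : ℝ) + 1) * t))
  have hsplit : ∀ (w : ℝ) (j : ℕ), (-1 : ℝ) ^ j * ((j : ℝ) + 1) ^ ((3 : ℝ) / 2) *
      exp (-(((j : ℝ) + 1) * (t + w))) = b j * exp (-(((j : ℝ) + 1) * w)) := fun w j => by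
    rw [mul_add, neg_add, exp_add]
    ring
  have hb : Summable fun j => |b j| * ((j : ℝ) + 1) ^ (-(1 / 2 : ℝ)) :=
    (summable_succ_rpow_mul_exp_neg_succ_mul 1 ht).congr fun j => by
      have habs : |b j| = ((j : ℝ) + 1) ^ ((3 : ℝ) / 2) * exp (-(((j : ℝ) + 1) * t)) := by
        simp [b, abs_of_nonneg (rpow_nonneg (Nat.cast_add_one_pos j).le _)]
      rw [habs, mul_right_comm,
        rpow_three_halves_mul_rpow_neg_one_half (Nat.cast_add_one_pos j), rpow_one]
  have hx : |exp (-t)| < 1 := by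
    rw [abs_of_pos (exp_pos _)]
    exact exp_lt_one_iff.2 (neg_neg_of_pos ht)
  simp_rw [hsplit]
  rw [show -(1 / 2 : ℝ) = 1 / 2 - 1 by norm_num,
    integral_rpow_sub_one_mul_tsum_exp_neg_mul one_half_pos (fun j => Nat.cast_add_one_pos j) hb,
    Gamma_one_half_eq]
  refine congrArg _ ((hasSum_neg_one_pow_mul_succ_mul_pow_succ hx).congr_fun fun j => ?_).tsum_eq
  calc b j * ((j : ℝ) + 1) ^ (-(1 / 2 : ℝ))
      = (-1) ^ j * (((j : ℝ) + 1) ^ ((3 : ℝ) / 2) * ((j : ℝ) + 1) ^ (-(1 / 2 : ℝ))) *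
          exp (((j + 1 : ℕ) : ℝ) * -t) := by
        simp only [b]
        push_cast
        ring_nf
    _ = (-1) ^ j * ((j : ℝ) + 1) * exp (-t) ^ (j + 1) := by
        rw [rpow_three_halves_mul_rpow_neg_one_half (Nat.cast_add_one_pos j), exp_nat_mul]
end
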